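/- Let A ⊆ x₀/y₀::R and x++A¹ = y++A². Then there exists B ⊆ P (P as in the MPCP-to-PCP reduction) such that (#x)++B¹ = #::(y#)++B². -/

import Mathlib

abbrev Card := List ℕ × List ℕ

def tau1 : List Card → List ℕ
  | [] => []
  | c :: A => c.1 ++ tau1 A

def tau2 : List Card → List ℕ
  | [] => []
  | c :: A => c.2 ++ tau2 A

inductive Rew (R : List Card) : List ℕ → List ℕ → Prop
  | step (u v l r : List ℕ) : (l, r) ∈ R → Rew R (u ++ l ++ v) (u ++ r ++ v)

def Rewt (R : List Card) : List ℕ → List ℕ → Prop :=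
  Relation.ReflTransGen (Rew R)

def hashL (h : ℕ) : List ℕ → List ℕ
  | [] => []
  | a :: x => h :: a :: hashL h x

def hashR (h : ℕ) : List ℕ → List ℕ
  | [] => []
  | a :: x => a :: h :: hashR h x

/-
The solution `A` is translated card by card, dropping the empty card. Prefixed by `#x` and
`#::(y#)`, the two sides then read `#x'` and `#::(x'#)` for the common word
`x' = x ++ tau1 A = y ++ tau2 A`; these differ only by a final `#`, which the closing card
`e = [#,$]/[$]` supplies.
-/

section Hash

variable (h : ℕ)

theorem hashL_append (u v : List ℕ) : hashL h (u ++ v) = hashL h u ++ hashL h v := by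
  induction u with
  | nil => rfl
  | cons a u ih => simp [hashL, ih]

theorem hashR_append (u v : List ℕ) : hashR h (u ++ v) = hashR h u ++ hashR h v := by
  induction u with
  | nil => rfl
  | cons a u ih => simp [hashR, ih]

theorem hashL_append_singleton (z : List ℕ) : hashL h z ++ [h] = h :: hashR h z := by
  induction z with
  | nil => rfl
  | cons a z ih => simp [hashL, hashR, ih]

end Hash

section Tau

theorem tau1_append (A B : List Card) : tau1 (A ++ B) = tau1 A ++ tau1 B := by
  induction A with
  | nil => rfl
  | cons c A ih => simp [tau1, ih]

theorem tau2_append (A B : List Card) : tau2 (A ++ B) = tau2 A ++ tau2 B := by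
  induction A with
  | nil => rfl
  | cons c A ih => simp [tau2, ih]

theorem tau1_map_hash (h : ℕ) (A : List Card) :
    tau1 (A.map fun c => (hashL h c.1, hashR h c.2)) = hashL h (tau1 A) := by
  induction A with
  | nil => rfl
  | cons c A ih => simp [tau1, ih, hashL_append]

theorem tau2_map_hash (h : ℕ) (A : List Card) :
    tau2 (A.map fun c => (hashL h c.1, hashR h c.2)) = hashR h (tau2 A) := by
  induction A with
  | nil => rfl
  | cons c A ih => simp [tau2, ih, hashR_append]

variable {p : Card → Bool} {A : List Card}

theorem tau1_filter (hp : ∀ c ∈ A, p c = false → c.1 = []) : tau1 (A.filter p) = tau1 A := by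
  induction A with
  | nil => rfl
  | cons c A ih =>
    have ih := ih fun c' hc' => hp c' (List.mem_cons_of_mem c hc')
    cases hc : p c
    · simp [hc, tau1, ih, hp c List.mem_cons_self hc]
    · simp [hc, tau1, ih]

theorem tau2_filter (hp : ∀ c ∈ A, p c = false → c.2 = []) : tau2 (A.filter p) = tau2 A := by
  induction A with
  | nil => rfl
  | cons c A ih =>
    have ih := ih fun c' hc' => hp c' (List.mem_cons_of_mem c hc')
    cases hc : p c
    · simp [hc, tau2, ih, hp c List.mem_cons_self hc]
    · simp [hc, tau2, ih]

end Tau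

theorem MPCP_PCP_trans1_general (x₀ y₀ : List ℕ) (R : List Card) (dol hsh : ℕ)
    (d e : Card) (P : List Card)
    (hee : e = ([hsh, dol], [dol]))
    (hP : P = [d, e] ++
      ((((x₀, y₀) :: R).filter (fun c => c ≠ (([] : List ℕ), ([] : List ℕ)))).map
        (fun c => (hashL hsh c.1, hashR hsh c.2))))
    (A : List Card) (hA : A ⊆ (x₀, y₀) :: R)
    (x y : List ℕ) (htau : x ++ tau1 A = y ++ tau2 A) :
    ∃ B : List Card, B ⊆ P ∧
      hashL hsh x ++ tau1 B = hsh :: (hashR hsh y ++ tau2 B) := by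
  set A' := A.filter fun c => c ≠ (([] : List ℕ), ([] : List ℕ))
  refine ⟨A'.map (fun c => (hashL hsh c.1, hashR hsh c.2)) ++ [e], ?_, ?_⟩
  · have hA' : A' ⊆ ((x₀, y₀) :: R).filter fun c => c ≠ (([] : List ℕ), ([] : List ℕ)) :=
      fun c hc => List.mem_filter.2 ⟨hA (List.mem_filter.1 hc).1, (List.mem_filter.1 hc).2⟩
    subst hP
    exact List.append_subset.2 ⟨List.subset_append_of_subset_right _ (List.map_subset _ hA'),
      by simp⟩
  · have htau1 : tau1 A' = tau1 A := tau1_filter fun c _ hc => by simp_all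
    have htau2 : tau2 A' = tau2 A := tau2_filter fun c _ hc => by simp_all
    have hhash : hashL hsh (x ++ tau1 A) ++ [hsh] = hsh :: hashR hsh (y ++ tau2 A) := by
      rw [htau, hashL_append_singleton]
    subst hee
    simp only [hashL_append, hashR_append] at hhash
    simp only [tau1_append, tau2_append, tau1_map_hash, tau2_map_hash, htau1, htau2, tau1, tau2,
      List.append_nil]
    simpa using congrArg (· ++ [dol]) hhash

theorem MPCP_PCP_trans1 (x₀ y₀ : List ℕ) (R : List Card) (Sig : List ℕ) (dol hsh : ℕ)
    (hR : ∀ c ∈ ((x₀, y₀) :: R), c.1 ⊆ Sig ∧ c.2 ⊆ Sig)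
    (hd : dol ∉ Sig) (hh : hsh ∉ Sig) (hne : dol ≠ hsh)
    (d e : Card) (P : List Card)
    (hdd : d = (dol :: hashL hsh x₀, dol :: hsh :: hashR hsh y₀))
    (hee : e = ([hsh, dol], [dol]))
    (hP : P = [d, e] ++
      ((((x₀, y₀) :: R).filter (fun c => c ≠ (([] : List ℕ), ([] : List ℕ)))).map
        (fun c => (hashL hsh c.1, hashR hsh c.2))))
    (A : List Card) (hA : A ⊆ (x₀, y₀) :: R)
    (x y : List ℕ) (htau : x ++ tau1 A = y ++ tau2 A) :
    ∃ B : List Card, B ⊆ P ∧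
      hashL hsh x ++ tau1 B = hsh :: (hashR hsh y ++ tau2 B) :=
  MPCP_PCP_trans1_general x₀ y₀ R dol hsh d e P hee hP A hA x y htau
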